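/- Let Σ and Σ' be bases of a finite closure system (X, φ), E an essential set, and suppose the implications of Σ with φ(left side) = E contribute total right-side cardinality s, while those of Σ' contribute s' ≤ s, with corresponding left sides of equal cardinality. Then the basis Σ'' formed by replacing the E-group of Σ with the E-group of Σ' is a valid basis whose size is at most the size of Σ. -/

import Mathlib

/-!
Let `T = S ∩ E`, where `S` obeys the mixed family and fails an implication `A → B` of `Σ` with
`φ A = E`. Then `φ T = E` and `T` obeys the mixed family. Obeying the implications of `Σ` off `E`
makes `T` behave like a quasi-closed set: it lies in, or meets in a closed set, every closed set.
Obeying the implications of `Σ'` on `E` then forces `T` to obey all of `Σ'`, so `T` is closed,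
and `B ⊆ φ A = E = T ⊆ S`. The size bound is bookkeeping.
-/

variable {X : Type*}

/-- A closure operator: extensive, monotone, idempotent. -/
def IsClosureOp (φ : Set X → Set X) : Prop :=
  (∀ A, A ⊆ φ A) ∧ (∀ A B : Set X, A ⊆ B → φ A ⊆ φ B) ∧ (∀ A, φ (φ A) = φ A)

/-- `S` obeys an implication `(A, B)` iff `A ⊆ S → B ⊆ S`. -/
def Obeys (S : Set X) (p : Set X × Set X) : Prop := p.1 ⊆ S → p.2 ⊆ S

/-- Family of sets obeying every implication in `Sig`. -/
def ObeyFam (Sig : Set (Set X × Set X)) : Set (Set X) := {S | ∀ p ∈ Sig, Obeys S p}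

/-- Family of `φ`-closed sets. -/
def ClosedFam (φ : Set X → Set X) : Set (Set X) := {S | φ S = S}

/-- `Q` is quasi-closed for `φ`. -/
def QuasiClosed (φ : Set X → Set X) (Q : Set X) : Prop :=
  Q ∉ ClosedFam φ ∧ ∀ S ∈ ClosedFam φ, Q ⊆ S ∨ Q ∩ S ∈ ClosedFam φ

section ClosureSystem

variable {φ : Set X → Set X} {Γ Γ' Γ₁ Γ₂ : Set (Set X × Set X)} {S T C : Set X}

namespace IsClosureOp

theorem subset_closure (hφ : IsClosureOp φ) (A : Set X) : A ⊆ φ A := hφ.1 A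

theorem closure_mono (hφ : IsClosureOp φ) {A B : Set X} (h : A ⊆ B) : φ A ⊆ φ B := hφ.2.1 A B h

theorem closure_closure (hφ : IsClosureOp φ) (A : Set X) : φ (φ A) = φ A := hφ.2.2 A

end IsClosureOp

theorem obeyFam_anti (h : Γ ⊆ Γ') : ObeyFam Γ' ⊆ ObeyFam Γ :=
  fun _ hS p hp => hS p (h hp)

theorem obeyFam_union : ObeyFam (Γ ∪ Γ') = ObeyFam Γ ∩ ObeyFam Γ' := by
  ext S
  simp [ObeyFam, or_imp, forall_and]

theorem snd_subset_closure_fst (hφ : IsClosureOp φ) (hΓ : ObeyFam Γ = ClosedFam φ)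
    {p : Set X × Set X} (hp : p ∈ Γ) : p.2 ⊆ φ p.1 := by
  have hcl : φ p.1 ∈ ObeyFam Γ := hΓ ▸ hφ.closure_closure p.1
  exact hcl p hp (hφ.subset_closure p.1)

theorem inter_mem_obeyFam (hφ : IsClosureOp φ) (hΓ : ∀ p ∈ Γ, p.2 ⊆ φ p.1)
    (hS : S ∈ ObeyFam Γ) {E : Set X} (hE : E ∈ ClosedFam φ) : S ∩ E ∈ ObeyFam Γ := by
  intro q hq hq₁
  refine Set.subset_inter (hS q hq (hq₁.trans Set.inter_subset_left)) ?_
  calc q.2 ⊆ φ q.1 := hΓ q hq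
    _ ⊆ φ E := hφ.closure_mono (hq₁.trans Set.inter_subset_right)
    _ = E := hE

theorem subset_or_inter_mem_closedFam (hφ : IsClosureOp φ) (hΓ : ObeyFam Γ = ClosedFam φ)
    (hT : T ∈ ObeyFam {q ∈ Γ | φ q.1 ≠ φ T}) (hC : C ∈ ClosedFam φ) :
    T ⊆ C ∨ T ∩ C ∈ ClosedFam φ := by
  by_cases hTC : T ⊆ C
  · exact Or.inl hTC
  right
  rw [← hΓ]
  intro q hq hq₁
  have hq₁C : q.1 ⊆ C := hq₁.trans Set.inter_subset_right
  by_cases hqT : φ q.1 = φ T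
  · refine absurd ?_ hTC
    calc T ⊆ φ T := hφ.subset_closure T
      _ = φ q.1 := hqT.symm
      _ ⊆ φ C := hφ.closure_mono hq₁C
      _ = C := hC
  · exact Set.subset_inter (hT q ⟨hq, hqT⟩ (hq₁.trans Set.inter_subset_left))
      ((hΓ ▸ hC : C ∈ ObeyFam Γ) q hq hq₁C)

theorem mem_closedFam_of_subset_or_inter_mem (hφ : IsClosureOp φ)
    (hΓ : ObeyFam Γ = ClosedFam φ) (hT : ∀ C ∈ ClosedFam φ, T ⊆ C ∨ T ∩ C ∈ ClosedFam φ)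
    (hTΓ : T ∈ ObeyFam {q ∈ Γ | φ q.1 = φ T}) : T ∈ ClosedFam φ := by
  rw [← hΓ]
  intro q hq hq₁
  by_cases hqT : φ q.1 = φ T
  · exact hTΓ q ⟨hq, hqT⟩ hq₁
  rcases hT (φ q.1) (hφ.closure_closure q.1) with hTq | hTq
  · refine absurd (subset_antisymm (hφ.closure_mono hq₁) ?_) hqT
    calc φ T ⊆ φ (φ q.1) := hφ.closure_mono hTq
      _ = φ q.1 := hφ.closure_closure q.1
  · have hTq' : T ∩ φ q.1 ∈ ObeyFam Γ := hΓ ▸ hTq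
    exact (hTq' q hq (Set.subset_inter hq₁ (hφ.subset_closure q.1))).trans Set.inter_subset_left

theorem mem_closedFam_of_obeys_mix (hφ : IsClosureOp φ) (h₁ : ObeyFam Γ₁ = ClosedFam φ)
    (h₂ : ObeyFam Γ₂ = ClosedFam φ) (hoff : T ∈ ObeyFam {q ∈ Γ₁ | φ q.1 ≠ φ T})
    (hon : T ∈ ObeyFam {q ∈ Γ₂ | φ q.1 = φ T}) : T ∈ ClosedFam φ :=
  mem_closedFam_of_subset_or_inter_mem hφ h₂
    (fun _ hC => subset_or_inter_mem_closedFam hφ h₁ hoff hC) hon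

theorem obeyFam_mix_eq (hφ : IsClosureOp φ) (h₁ : ObeyFam Γ₁ = ClosedFam φ)
    (h₂ : ObeyFam Γ₂ = ClosedFam φ) (E : Set X) :
    ObeyFam ({p ∈ Γ₂ | φ p.1 = E} ∪ {p ∈ Γ₁ | φ p.1 ≠ E}) = ClosedFam φ := by
  set M := {p ∈ Γ₂ | φ p.1 = E} ∪ {p ∈ Γ₁ | φ p.1 ≠ E}
  have hM : ∀ p ∈ M, p.2 ⊆ φ p.1 := by
    rintro p (hp | hp)
    exacts [snd_subset_closure_fst hφ h₂ hp.1, snd_subset_closure_fst hφ h₁ hp.1]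
  refine subset_antisymm (fun S hS => ?_) ?_
  · rw [← h₁]
    intro p hp hpS
    obtain hpE | hpE := ne_or_eq (φ p.1) E
    · exact hS p (Or.inr ⟨hp, hpE⟩) hpS
    set T := S ∩ φ p.1
    have hφT : φ T = E := by
      refine hpE ▸ subset_antisymm ?_ (hφ.closure_mono (Set.subset_inter hpS (hφ.subset_closure p.1)))
      calc φ T ⊆ φ (φ p.1) := hφ.closure_mono Set.inter_subset_right
        _ = φ p.1 := hφ.closure_closure p.1
    have hT : T ∈ ObeyFam M := inter_mem_obeyFam hφ hM hS (hφ.closure_closure p.1)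
    have hTcl : φ T = T := by
      refine mem_closedFam_of_obeys_mix hφ h₁ h₂ (obeyFam_anti ?_ hT) (obeyFam_anti ?_ hT)
      · exact fun q hq => Or.inr ⟨hq.1, hφT ▸ hq.2⟩
      · exact fun q hq => Or.inl ⟨hq.1, hφT ▸ hq.2⟩
    calc p.2 ⊆ φ p.1 := snd_subset_closure_fst hφ h₁ hp
      _ = T := hpE.trans (hφT.symm.trans hTcl)
      _ ⊆ S := Set.inter_subset_left
  · calc ClosedFam φ = ObeyFam (Γ₂ ∪ Γ₁) := by rw [obeyFam_union, h₁, h₂, Set.inter_self]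
      _ ⊆ ObeyFam M := obeyFam_anti (Set.union_subset_union (fun _ hp => hp.1) fun _ hp => hp.1)

end ClosureSystem

theorem Finset.sum_filter_union_filter_not_le {ι M : Type*} [DecidableEq ι] [AddCommMonoid M]
    [PartialOrder M] [IsOrderedAddMonoid M] {P : ι → Prop} [DecidablePred P] (s t : Finset ι)
    (f : ι → M) (h : ∑ i ∈ t.filter P, f i ≤ ∑ i ∈ s.filter P, f i) :
    ∑ i ∈ t.filter P ∪ s.filter (fun i => ¬P i), f i ≤ ∑ i ∈ s, f i := by
  rw [Finset.sum_union (Finset.disjoint_filter_filter_not t s P),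
    ← Finset.sum_filter_add_sum_filter_not s P]
  exact add_le_add_left h _

open scoped Classical in
theorem stmt16_general (φ : Set X → Set X) (hφ : IsClosureOp φ)
    (E : Set X)
    (T₁ T₂ : Finset (Set X × Set X))
    (h₁ : ObeyFam (↑T₁ : Set (Set X × Set X)) = ClosedFam φ)
    (h₂ : ObeyFam (↑T₂ : Set (Set X × Set X)) = ClosedFam φ)
    (hleft : ∑ p ∈ T₂.filter (fun p => φ p.1 = E), p.1.ncard
           = ∑ p ∈ T₁.filter (fun p => φ p.1 = E), p.1.ncard)
    (hright : ∑ p ∈ T₂.filter (fun p => φ p.1 = E), p.2.ncard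
            ≤ ∑ p ∈ T₁.filter (fun p => φ p.1 = E), p.2.ncard) :
    ObeyFam (↑(T₂.filter (fun p => φ p.1 = E) ∪ T₁.filter (fun p => φ p.1 ≠ E)) :
        Set (Set X × Set X)) = ClosedFam φ ∧
    ∑ p ∈ T₂.filter (fun p => φ p.1 = E) ∪ T₁.filter (fun p => φ p.1 ≠ E),
        (p.1.ncard + p.2.ncard)
      ≤ ∑ p ∈ T₁, (p.1.ncard + p.2.ncard) := by
  refine ⟨?_, Finset.sum_filter_union_filter_not_le T₁ T₂ _ ?_⟩
  · rw [Finset.coe_union, Finset.coe_filter, Finset.coe_filter]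
    exact obeyFam_mix_eq hφ h₁ h₂ E
  · simp only [Finset.sum_add_distrib, hleft]
    exact Nat.add_le_add_left hright _

open scoped Classical in
theorem stmt16 [Finite X] (φ : Set X → Set X) (hφ : IsClosureOp φ)
    (E : Set X) (hE : ∃ Q, QuasiClosed φ Q ∧ φ Q = E)
    (T₁ T₂ : Finset (Set X × Set X))
    (h₁ : ObeyFam (↑T₁ : Set (Set X × Set X)) = ClosedFam φ)
    (h₂ : ObeyFam (↑T₂ : Set (Set X × Set X)) = ClosedFam φ)
    (hleft : ∑ p ∈ T₂.filter (fun p => φ p.1 = E), p.1.ncard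
           = ∑ p ∈ T₁.filter (fun p => φ p.1 = E), p.1.ncard)
    (hright : ∑ p ∈ T₂.filter (fun p => φ p.1 = E), p.2.ncard
            ≤ ∑ p ∈ T₁.filter (fun p => φ p.1 = E), p.2.ncard) :
    ObeyFam (↑(T₂.filter (fun p => φ p.1 = E) ∪ T₁.filter (fun p => φ p.1 ≠ E)) :
        Set (Set X × Set X)) = ClosedFam φ ∧
    ∑ p ∈ T₂.filter (fun p => φ p.1 = E) ∪ T₁.filter (fun p => φ p.1 ≠ E),
        (p.1.ncard + p.2.ncard)
      ≤ ∑ p ∈ T₁, (p.1.ncard + p.2.ncard) :=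
  stmt16_general φ hφ E T₁ T₂ h₁ h₂ hleft hright
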